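/- Fix μ ∈ P(X). Suppose there is a sub-probability measure λ on X with p(·|x,a,μ) ≥ λ setwise for all (x,a), and that the sub-stochastic kernel q(·|x,a,μ) := p(·|x,a,μ) − λ satisfies ∫_X w_max(y) q(dy|x,a,μ) ≤ α·w(x,a) for all (x,a), with α ∈ (0,1). Define R_μ u(x) := inf_{a∈A} [ c(x,a,μ) + ∫_X u(y) q(dy|x,a,μ) ]. Then for all continuous u, û : X → ℝ with finite w_max-norm, ‖R_μ u − R_μ û‖_{w_max} ≤ α·‖u − û‖_{w_max}; that is, R_μ is a contraction with modulus α with respect to the w_max-norm. -/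

import Mathlib

/-
For every action `a`, the two bracketed expressions differ by `∫ (u - u') dq(·|x,a,μ)`, which is at
most `‖u - u'‖ · ∫ w_max dq ≤ α ‖u - u'‖ w(x,a) ≤ α ‖u - u'‖ w_max(x)` in absolute value. Two
families that are uniformly close have infima that are equally close, and dividing by `w_max(x)`
gives the contraction estimate.
-/

open MeasureTheory

noncomputable section

/-- Wasserstein-1 distance via Kantorovich–Rubinstein duality. -/
def W1 {X : Type*} [MeasurableSpace X] [MetricSpace X] (μ ν : Measure X) : ℝ :=
  sSup {r : ℝ | ∃ g : X → ℝ, LipschitzWith 1 g ∧ r = |∫ x, g x ∂μ - ∫ x, g x ∂ν|}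

/-- The weighted sup norm `‖v‖_w` over `X × A`. -/
def wNorm {X : Type*} {d : ℕ} (A : Set (EuclideanSpace ℝ (Fin d)))
    (w v : X → EuclideanSpace ℝ (Fin d) → ℝ) : ℝ :=
  ⨆ q : X × ↥A, |v q.1 q.2.1| / w q.1 q.2.1

/-- `Q_min(x) = inf_{a ∈ A} Q(x,a)`. -/
def minA {X : Type*} {d : ℕ} (A : Set (EuclideanSpace ℝ (Fin d)))
    (Q : X → EuclideanSpace ℝ (Fin d) → ℝ) (x : X) : ℝ :=
  ⨅ a : ↥A, Q x a.1

/-- `w_max(x) = sup_{a ∈ A} w(x,a)`. -/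
def wmaxA {X : Type*} {d : ℕ} (A : Set (EuclideanSpace ℝ (Fin d)))
    (w : X → EuclideanSpace ℝ (Fin d) → ℝ) (x : X) : ℝ :=
  ⨆ a : ↥A, w x a.1

/-- The weighted sup norm `‖u‖_{w_max}` for functions on `X`. -/
def wmaxNorm {X : Type*} {d : ℕ} (A : Set (EuclideanSpace ℝ (Fin d)))
    (w : X → EuclideanSpace ℝ (Fin d) → ℝ) (u : X → ℝ) : ℝ :=
  ⨆ x : X, |u x| / wmaxA A w x

section Infimum

variable {ι : Type*} {f g : ι → ℝ} {c : ℝ}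

theorem bddBelow_range_of_abs_sub_le (h : ∀ i, |f i - g i| ≤ c) (hg : BddBelow (Set.range g)) :
    BddBelow (Set.range f) := by
  obtain ⟨m, hm⟩ := hg
  refine ⟨m - c, ?_⟩
  rintro _ ⟨i, rfl⟩
  linarith [hm ⟨i, rfl⟩, (abs_le.1 (h i)).1]

theorem ciInf_le_ciInf_add [Nonempty ι] (hf : BddBelow (Set.range f))
    (h : ∀ i, f i ≤ g i + c) : ⨅ i, f i ≤ (⨅ i, g i) + c :=
  sub_le_iff_le_add.1 <| le_ciInf fun i => sub_le_iff_le_add.2 <| (ciInf_le hf i).trans (h i)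

/-- If one family is unbounded below, so is the other, and both infima are the junk value `0`. -/
theorem abs_iInf_sub_iInf_le (hc : 0 ≤ c) (h : ∀ i, |f i - g i| ≤ c) :
    |(⨅ i, f i) - ⨅ i, g i| ≤ c := by
  have h' : ∀ i, |g i - f i| ≤ c := fun i => abs_sub_comm (g i) (f i) ▸ h i
  rcases isEmpty_or_nonempty ι with hι | hι
  · simpa using hc
  by_cases hg : BddBelow (Set.range g)
  · have hf := bddBelow_range_of_abs_sub_le h hg
    rw [abs_sub_le_iff]
    constructor
    · linarith [ciInf_le_ciInf_add (g := g) (c := c) hf fun i => by linarith [(abs_le.1 (h i)).2]]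
    · linarith [ciInf_le_ciInf_add (g := f) (c := c) hg fun i => by linarith [(abs_le.1 (h' i)).2]]
  · have hf : ¬BddBelow (Set.range f) := fun hf => hg (bddBelow_range_of_abs_sub_le h' hf)
    rw [Real.iInf_of_not_bddBelow hf, Real.iInf_of_not_bddBelow hg]
    simpa using hc

end Infimum

section WeightedSupNorm

variable {X : Type*} {W v : X → ℝ} {K : ℝ}

theorem abs_le_iSup_abs_div_mul (hW : ∀ x, 0 < W x) (hv : ∃ C, ∀ x, |v x| ≤ C * W x) (x : X) :
    |v x| ≤ (⨆ y, |v y| / W y) * W x := by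
  obtain ⟨C, hC⟩ := hv
  have hbdd : BddAbove (Set.range fun y => |v y| / W y) := by
    refine ⟨C, ?_⟩
    rintro _ ⟨y, rfl⟩
    exact (div_le_iff₀ (hW y)).2 (hC y)
  exact (div_le_iff₀ (hW x)).1 (le_ciSup hbdd x)

theorem iSup_abs_div_nonneg (hW : ∀ x, 0 < W x) : 0 ≤ ⨆ x, |v x| / W x :=
  Real.iSup_nonneg fun x => div_nonneg (abs_nonneg _) (hW x).le

theorem iSup_abs_div_le (hW : ∀ x, 0 < W x) (hK : 0 ≤ K) (h : ∀ x, |v x| ≤ K * W x) :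
    ⨆ x, |v x| / W x ≤ K :=
  Real.iSup_le (fun x => (div_le_iff₀ (hW x)).2 (h x)) hK

end WeightedSupNorm

section MaximalWeight

variable {X : Type*} {d : ℕ} {A : Set (EuclideanSpace ℝ (Fin d))}
  {w : X → EuclideanSpace ℝ (Fin d) → ℝ} {x : X} {a : EuclideanSpace ℝ (Fin d)}

theorem le_wmaxA (hA : IsCompact A) (hw : ContinuousOn (w x) A) (ha : a ∈ A) :
    w x a ≤ wmaxA A w x := by
  have hbdd : BddAbove (Set.range fun b : A => w x b) := by
    simpa only [Set.image_eq_range] using (hA.image_of_continuousOn hw).bddAbove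
  exact le_ciSup hbdd ⟨a, ha⟩

theorem wmaxA_pos (hA : IsCompact A) (hw : ContinuousOn (w x) A) (hw1 : ∀ b ∈ A, 1 ≤ w x b)
    (ha : a ∈ A) : 0 < wmaxA A w x :=
  one_pos.trans_le <| (hw1 a ha).trans (le_wmaxA hA hw ha)

end MaximalWeight

theorem abs_integral_sub_integral_le {X : Type*} [MeasurableSpace X] {ν : Measure X}
    {W u u' : X → ℝ} {C C' N : ℝ} (hW : Integrable W ν)
    (hu : AEStronglyMeasurable u ν) (hu' : AEStronglyMeasurable u' ν)
    (hub : ∀ x, |u x| ≤ C * W x) (hu'b : ∀ x, |u' x| ≤ C' * W x)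
    (hN : ∀ x, |u x - u' x| ≤ N * W x) :
    |∫ x, u x ∂ν - ∫ x, u' x ∂ν| ≤ N * ∫ x, W x ∂ν := by
  have hint : ∀ {v : X → ℝ} {C : ℝ}, AEStronglyMeasurable v ν → (∀ x, |v x| ≤ C * W x) →
      Integrable v ν := fun hv hvb => (hW.const_mul _).mono' hv (.of_forall hvb)
  rw [← integral_sub (hint hu hub) (hint hu' hu'b), ← integral_const_mul]
  exact norm_integral_le_of_norm_le (f := fun x => u x - u' x) (hW.const_mul N) (.of_forall hN)

theorem statement19_general
    {X : Type*} [MeasurableSpace X] [MetricSpace X] [BorelSpace X] {d : ℕ}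
    (A : Set (EuclideanSpace ℝ (Fin d))) (hA : IsCompact A) (hAne : A.Nonempty)
    (w : X → EuclideanSpace ℝ (Fin d) → ℝ)
    (hwcont : Continuous fun q : X × EuclideanSpace ℝ (Fin d) => w q.1 q.2)
    (hw1 : ∀ x, ∀ a ∈ A, 1 ≤ w x a)
    (p : X → EuclideanSpace ℝ (Fin d) → ProbabilityMeasure X → ProbabilityMeasure X)
    (c : X → EuclideanSpace ℝ (Fin d) → ProbabilityMeasure X → ℝ)
    (μ : ProbabilityMeasure X)
    (lam : Measure X)
    (α : ℝ) (hα : α ∈ Set.Ioo (0 : ℝ) 1)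
    (hwint : ∀ x, ∀ a ∈ A, Integrable (wmaxA A w) ((p x a μ : Measure X) - lam))
    (hdrift : ∀ x, ∀ a ∈ A,
      ∫ y, wmaxA A w y ∂((p x a μ : Measure X) - lam) ≤ α * w x a)
    (u u' : X → ℝ) (hu : Continuous u) (hu' : Continuous u')
    (hufin : ∃ C : ℝ, ∀ x, |u x| ≤ C * wmaxA A w x)
    (hu'fin : ∃ C : ℝ, ∀ x, |u' x| ≤ C * wmaxA A w x) :
    wmaxNorm A w (fun x =>
        (⨅ a : ↥A, (c x a.1 μ + ∫ y, u y ∂((p x a.1 μ : Measure X) - lam))) -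
        (⨅ a : ↥A, (c x a.1 μ + ∫ y, u' y ∂((p x a.1 μ : Measure X) - lam))))
      ≤ α * wmaxNorm A w (fun x => u x - u' x) := by
  have hw : ∀ x, ContinuousOn (w x) A := fun x =>
    (hwcont.comp (Continuous.prodMk_right x)).continuousOn
  have hpos : ∀ x, 0 < wmaxA A w x := fun x => wmaxA_pos hA (hw x) (hw1 x) hAne.some_mem
  obtain ⟨C, hC⟩ := hufin
  obtain ⟨C', hC'⟩ := hu'fin
  set N := wmaxNorm A w (fun x => u x - u' x)
  have hN0 : 0 ≤ N := iSup_abs_div_nonneg hpos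
  have hN : ∀ y, |u y - u' y| ≤ N * wmaxA A w y :=
    abs_le_iSup_abs_div_mul hpos ⟨C + C', fun y => by
      linarith [abs_sub (u y) (u' y), hC y, hC' y]⟩
  refine iSup_abs_div_le hpos (mul_nonneg hα.1.le hN0) fun x => ?_
  refine abs_iInf_sub_iInf_le (mul_nonneg (mul_nonneg hα.1.le hN0) (hpos x).le) fun a => ?_
  set q : Measure X := (p x a μ : Measure X) - lam
  calc |c x a μ + ∫ y, u y ∂q - (c x a μ + ∫ y, u' y ∂q)|
      = |∫ y, u y ∂q - ∫ y, u' y ∂q| := by rw [add_sub_add_left_eq_sub]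
    _ ≤ N * ∫ y, wmaxA A w y ∂q :=
        abs_integral_sub_integral_le (hwint x a a.2) hu.aestronglyMeasurable
          hu'.aestronglyMeasurable hC hC' hN
    _ ≤ N * (α * wmaxA A w x) := by
        gcongr
        exact (hdrift x a a.2).trans
          (mul_le_mul_of_nonneg_left (le_wmaxA hA (hw x) a.2) hα.1.le)
    _ = α * N * wmaxA A w x := by ring

/-- the average-cost operator `R_μ` is an `α`-contraction in the
`w_max`-weighted sup norm. -/
theorem statement19
    {X : Type*} [MeasurableSpace X] [MetricSpace X] [CompleteSpace X]
    [TopologicalSpace.SeparableSpace X] [BorelSpace X] {d : ℕ}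
    (A : Set (EuclideanSpace ℝ (Fin d))) (hA : IsCompact A) (hAne : A.Nonempty)
    (w : X → EuclideanSpace ℝ (Fin d) → ℝ)
    (hwcont : Continuous fun q : X × EuclideanSpace ℝ (Fin d) => w q.1 q.2)
    (hw1 : ∀ x, ∀ a ∈ A, 1 ≤ w x a)
    (p : X → EuclideanSpace ℝ (Fin d) → ProbabilityMeasure X → ProbabilityMeasure X)
    (c : X → EuclideanSpace ℝ (Fin d) → ProbabilityMeasure X → ℝ)
    (hc0 : ∀ x a μ, 0 ≤ c x a μ)
    (μ : ProbabilityMeasure X)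
    (lam : Measure X) (hsub : lam Set.univ ≤ 1)
    (hminor : ∀ x, ∀ a ∈ A, lam ≤ (p x a μ : Measure X))
    (α : ℝ) (hα : α ∈ Set.Ioo (0 : ℝ) 1)
    (hwint : ∀ x, ∀ a ∈ A, Integrable (wmaxA A w) ((p x a μ : Measure X) - lam))
    (hdrift : ∀ x, ∀ a ∈ A,
      ∫ y, wmaxA A w y ∂((p x a μ : Measure X) - lam) ≤ α * w x a)
    (u u' : X → ℝ) (hu : Continuous u) (hu' : Continuous u')
    (hufin : ∃ C : ℝ, ∀ x, |u x| ≤ C * wmaxA A w x)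
    (hu'fin : ∃ C : ℝ, ∀ x, |u' x| ≤ C * wmaxA A w x) :
    wmaxNorm A w (fun x =>
        (⨅ a : ↥A, (c x a.1 μ + ∫ y, u y ∂((p x a.1 μ : Measure X) - lam))) -
        (⨅ a : ↥A, (c x a.1 μ + ∫ y, u' y ∂((p x a.1 μ : Measure X) - lam))))
      ≤ α * wmaxNorm A w (fun x => u x - u' x) :=
  statement19_general A hA hAne w hwcont hw1 p c μ lam α hα hwint hdrift u u' hu hu' hufin hu'fin
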